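/- arXiv:2302.12586 — 2 statements merged into one kernel-verified Lean document; each statement's English description precedes it below -/
import Mathlib

section
/- Let d ≥ 2, 0 < α < 2, b ≥ 1, and fix A ≥ 1. Define for x ∈ (0, A) the function F(x,A) = (A^{b+1}/x²) [ (A-x)^{-b} - A^{-b} + e^{x(α-d)} ((A+x)^{-b} - A^{-b}) ] e^{-x(1+α)}. Then there exists a constant M > 0, independent of x ∈ (0, log 2] and A ≥ 1 with x < A, such that F(x,A) ≤ M. -/
open Filter Real Set
open scoped Topology

/-- Mean value theorem for `rpow` on a positive interval. -/
lemma rpow_mvt {p a b : ℝ} (ha : 0 < a) (hab : a < b) :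
    ∃ c ∈ Set.Ioo a b, b ^ p - a ^ p = p * c ^ (p - 1) * (b - a) := by
  have hcont : ContinuousOn (fun x : ℝ => x ^ p) (Set.Icc a b) := fun x hx =>
    (Real.continuousAt_rpow_const x p (Or.inl (lt_of_lt_of_le ha hx.1).ne')).continuousWithinAt
  have hderiv : ∀ x ∈ Set.Ioo a b, HasDerivAt (fun x : ℝ => x ^ p) (p * x ^ (p - 1)) x :=
    fun x hx => Real.hasDerivAt_rpow_const (Or.inl (ha.trans hx.1).ne')
  obtain ⟨c, hc, heq⟩ := exists_hasDerivAt_eq_slope _ _ hab hcont hderiv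
  refine ⟨c, hc, ?_⟩
  have hba : b - a ≠ 0 := by linarith [hab]
  field_simp at heq
  linarith [heq]

set_option maxHeartbeats 1600000 in
/-- Uniform bound on
`F(x,A) = (A^{b+1}/x²)[(A-x)^{-b} - A^{-b} + e^{x(α-d)}((A+x)^{-b} - A^{-b})] e^{-x(1+α)}`
for `0 < x ≤ log 2` and `A ≥ 1` with `x < A`. -/
theorem stmt_5 (d : ℕ) (hd : 2 ≤ d) (α b : ℝ) (hα0 : 0 < α) (hα2 : α < 2)
    (hαd : α < d) (hb : 1 ≤ b) :
    ∃ M : ℝ, 0 < M ∧ ∀ x A : ℝ, 0 < x → x ≤ Real.log 2 → 1 ≤ A → x < A →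
      A ^ (b + 1) / x ^ 2 *
          ((A - x) ^ (-b) - A ^ (-b) + Real.exp (x * (α - d)) * ((A + x) ^ (-b) - A ^ (-b))) *
          Real.exp (-x * (1 + α)) ≤ M := by
  have hlog2 : Real.log 2 < 1 := by
    have := Real.log_two_lt_d9; linarith
  have hlog2' : (0:ℝ) < 1 - Real.log 2 := by linarith
  set K : ℝ := (1 - Real.log 2) ^ (-b - 2) with hK
  have hKpos : 0 < K := Real.rpow_pos_of_pos hlog2' _
  refine ⟨2 * b * (b + 1) * K + b * d, by positivity, ?_⟩
  intro x A hx hxlog hA hxA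
  have hlogpos : 0 < Real.log 2 := Real.log_pos (by norm_num)
  have hAx : 0 < A - x := by linarith
  have hApos : 0 < A := by linarith
  -- key lower bound on A - x
  have hkey : A * (1 - Real.log 2) ≤ A - x := by
    have h := hxlog.trans (le_mul_of_one_le_left hlogpos.le hA)
    linarith
  -- three mean value theorems
  obtain ⟨c1, hc1, e1⟩ := rpow_mvt (p := -b) hAx (show A - x < A by linarith)
  obtain ⟨c2, hc2, e2⟩ := rpow_mvt (p := -b) hApos (show A < A + x by linarith)
  have hc1pos : 0 < c1 := hAx.trans hc1.1
  have hc12 : c1 < c2 := hc1.2.trans hc2.1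
  obtain ⟨c3, hc3, e3⟩ := rpow_mvt (p := -b - 1) hc1pos hc12
  set t1 := c1 ^ (-b - 1) with ht1
  set t2 := c2 ^ (-b - 1) with ht2
  set t3 := c3 ^ (-b - 1 - 1) with ht3
  have h1 : (A - x) ^ (-b) - A ^ (-b) = b * t1 * x := by linear_combination -e1
  have h2 : (A + x) ^ (-b) - A ^ (-b) = -(b * t2 * x) := by linear_combination e2
  have h3 : t1 - t2 = (b + 1) * t3 * (c2 - c1) := by linear_combination -e3
  have hc3pos : 0 < c3 := hc1pos.trans hc3.1
  have ht3pos : 0 < t3 := Real.rpow_pos_of_pos hc3pos _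
  have ht2pos : 0 < t2 := Real.rpow_pos_of_pos (hApos.trans hc2.1) _
  -- bounds
  have hq : t3 ≤ (A - x) ^ (-b - 1 - 1) :=
    Real.rpow_le_rpow_of_nonpos hAx (by linarith [hc1.1, hc3.1]) (by linarith)
  have hr : t2 ≤ A ^ (-b - 1) :=
    Real.rpow_le_rpow_of_nonpos hApos (hc2.1.le) (by linarith)
  have hqpos : (0:ℝ) < (A - x) ^ (-b - 1 - 1) := Real.rpow_pos_of_pos hAx _
  have hrpos : (0:ℝ) < A ^ (-b - 1) := Real.rpow_pos_of_pos hApos _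
  have hc2c1 : c2 - c1 ≤ 2 * x := by
    have := hc1.1; have := hc2.2; linarith
  have hc2c1' : 0 ≤ c2 - c1 := by linarith
  set E1 := Real.exp (x * (α - d)) with hE1
  have hE1le : E1 ≤ 1 := by
    rw [hE1, Real.exp_le_one_iff]
    have h := mul_nonneg hx.le (show (0:ℝ) ≤ (d:ℝ) - α by linarith)
    linarith
  have hE1pos : 0 < E1 := Real.exp_pos _
  have hE1lb : 1 - E1 ≤ x * (d - α) := by
    have h := Real.add_one_le_exp (x * (α - d))
    linarith
  -- bound on the bracket B
  set B := (A - x) ^ (-b) - A ^ (-b) + E1 * ((A + x) ^ (-b) - A ^ (-b)) with hB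
  have hBeq : B = b * x * (t1 - t2) + b * x * t2 * (1 - E1) := by
    rw [hB, h1, h2]; ring
  have hdiff : t1 - t2 ≤ (b + 1) * (A - x) ^ (-b - 1 - 1) * (2 * x) := by
    rw [h3]
    have hbx : (0:ℝ) < b + 1 := by linarith
    have h4 : t3 * (c2 - c1) ≤ (A - x) ^ (-b - 1 - 1) * (2 * x) :=
      mul_le_mul hq hc2c1 hc2c1' hqpos.le
    calc (b + 1) * t3 * (c2 - c1) = (b + 1) * (t3 * (c2 - c1)) := by ring
      _ ≤ (b + 1) * ((A - x) ^ (-b - 1 - 1) * (2 * x)) :=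
          mul_le_mul_of_nonneg_left h4 hbx.le
      _ = (b + 1) * (A - x) ^ (-b - 1 - 1) * (2 * x) := by ring
  have hBle : B ≤ 2 * b * (b + 1) * x ^ 2 * (A - x) ^ (-b - 1 - 1)
      + b * (d - α) * x ^ 2 * A ^ (-b - 1) := by
    rw [hBeq]
    have hbx : 0 < b * x := mul_pos (by linarith) hx
    have hp1 : b * x * (t1 - t2) ≤ b * x * ((b + 1) * (A - x) ^ (-b - 1 - 1) * (2 * x)) :=
      mul_le_mul_of_nonneg_left hdiff hbx.le
    have hp2 : t2 * (1 - E1) ≤ A ^ (-b - 1) * (x * (d - α)) :=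
      mul_le_mul hr hE1lb (by linarith) hrpos.le
    have hp3 : b * x * (t2 * (1 - E1)) ≤ b * x * (A ^ (-b - 1) * (x * (d - α))) :=
      mul_le_mul_of_nonneg_left hp2 hbx.le
    calc b * x * (t1 - t2) + b * x * t2 * (1 - E1)
        = b * x * (t1 - t2) + b * x * (t2 * (1 - E1)) := by ring
      _ ≤ b * x * ((b + 1) * (A - x) ^ (-b - 1 - 1) * (2 * x))
          + b * x * (A ^ (-b - 1) * (x * (d - α))) := add_le_add hp1 hp3
      _ = 2 * b * (b + 1) * x ^ 2 * (A - x) ^ (-b - 1 - 1)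
          + b * (d - α) * x ^ 2 * A ^ (-b - 1) := by ring
  -- now the final bound
  set U := 2 * b * (b + 1) * x ^ 2 * (A - x) ^ (-b - 1 - 1)
      + b * (d - α) * x ^ 2 * A ^ (-b - 1) with hU
  have hUnn : 0 ≤ U := by
    have h1 : 0 ≤ 2 * b * (b + 1) * x ^ 2 * (A - x) ^ (-b - 1 - 1) := by positivity
    have h2 : 0 ≤ b * (d - α) * x ^ 2 * A ^ (-b - 1) := by
      have : (0:ℝ) ≤ d - α := by linarith
      positivity
    linarith
  set E2 := Real.exp (-x * (1 + α)) with hE2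
  have hE2le : E2 ≤ 1 := by
    rw [hE2, Real.exp_le_one_iff]
    have h := mul_nonneg hx.le (show (0:ℝ) ≤ 1 + α by linarith)
    linarith
  have hE2pos : 0 < E2 := Real.exp_pos _
  have hBU : B * E2 ≤ U := by
    rcases le_or_gt B 0 with h | h
    · exact (mul_nonpos_of_nonpos_of_nonneg h hE2pos.le).trans hUnn
    · calc B * E2 ≤ B * 1 := mul_le_mul_of_nonneg_left hE2le h.le
        _ = B := mul_one B
        _ ≤ U := hBle
  have hPpos : 0 < A ^ (b + 1) / x ^ 2 := by positivity
  have step1 : A ^ (b + 1) / x ^ 2 * B * E2 ≤ A ^ (b + 1) / x ^ 2 * U := by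
    have h := mul_le_mul_of_nonneg_left hBU hPpos.le
    calc A ^ (b + 1) / x ^ 2 * B * E2 = A ^ (b + 1) / x ^ 2 * (B * E2) := by ring
      _ ≤ A ^ (b + 1) / x ^ 2 * U := h
  -- compute A^(b+1)/x² * U
  have hx2 : (x:ℝ) ^ 2 ≠ 0 := by positivity
  have hPU : A ^ (b + 1) / x ^ 2 * U
      = 2 * b * (b + 1) * (A ^ (b + 1) * (A - x) ^ (-b - 1 - 1))
        + b * (d - α) * (A ^ (b + 1) * A ^ (-b - 1)) := by
    rw [hU]; field_simp
  -- second product is 1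
  have hA2 : A ^ (b + 1) * A ^ (-b - 1) = 1 := by
    rw [← Real.rpow_add hApos, show b + 1 + (-b - 1) = 0 by ring, Real.rpow_zero]
  -- first product bound
  have hA1 : A ^ (b + 1) * (A - x) ^ (-b - 1 - 1) ≤ K := by
    have step : (A - x) ^ (-b - 1 - 1) ≤ (A * (1 - Real.log 2)) ^ (-b - 1 - 1) :=
      Real.rpow_le_rpow_of_nonpos (by positivity) hkey (by linarith)
    have hmul : (A * (1 - Real.log 2)) ^ (-b - 1 - 1)
        = A ^ (-b - 1 - 1) * (1 - Real.log 2) ^ (-b - 1 - 1) :=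
      Real.mul_rpow hApos.le hlog2'.le
    have hexp : (-b - 1 - 1 : ℝ) = -b - 2 := by ring
    have hAA : A ^ (b + 1) * A ^ (-b - 1 - 1) ≤ 1 := by
      rw [← Real.rpow_add hApos]
      calc A ^ (b + 1 + (-b - 1 - 1)) = A ^ (-1 : ℝ) := by
            rw [show b + 1 + (-b - 1 - 1) = (-1:ℝ) by ring]
        _ ≤ A ^ (0 : ℝ) := Real.rpow_le_rpow_of_exponent_le hA (by norm_num)
        _ = 1 := Real.rpow_zero A
    calc A ^ (b + 1) * (A - x) ^ (-b - 1 - 1)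
        ≤ A ^ (b + 1) * (A * (1 - Real.log 2)) ^ (-b - 1 - 1) := by
          apply mul_le_mul_of_nonneg_left step (Real.rpow_pos_of_pos hApos _).le
      _ = (A ^ (b + 1) * A ^ (-b - 1 - 1)) * (1 - Real.log 2) ^ (-b - 1 - 1) := by
          rw [hmul]; ring
      _ ≤ 1 * (1 - Real.log 2) ^ (-b - 1 - 1) := by
          apply mul_le_mul_of_nonneg_right hAA (Real.rpow_pos_of_pos hlog2' _).le
      _ = K := by rw [one_mul, hK, hexp]
  have hfinal : A ^ (b + 1) / x ^ 2 * U ≤ 2 * b * (b + 1) * K + b * d := by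
    rw [hPU, hA2]
    have hbpos : (0:ℝ) < b := by linarith
    have hb1 : (0:ℝ) < 2 * b * (b + 1) :=
      mul_pos (mul_pos two_pos hbpos) (by linarith)
    have t1' : 2 * b * (b + 1) * (A ^ (b + 1) * (A - x) ^ (-b - 1 - 1))
        ≤ 2 * b * (b + 1) * K := mul_le_mul_of_nonneg_left hA1 hb1.le
    have t2' : b * (d - α) * 1 ≤ b * d := by
      have h := mul_pos hbpos hα0
      linarith
    linarith
  calc A ^ (b + 1) / x ^ 2 * B * E2 ≤ A ^ (b + 1) / x ^ 2 * U := step1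
    _ ≤ 2 * b * (b + 1) * K + b * d := hfinal
end

section
/- Let d ≥ 2, 0 < α < 2, and let Φ(τ,r) = r^{-(d-α)}[ (log er)^{-1} - (log(er/τ))^{-1} + τ^{-d+α}((log er)^{-1} - (log(erτ))^{-1}) ]. Then lim_{r→∞} (log r)² r^{d-α} ∫_2^r Φ(τ,r) τ^{-1-α} dτ = 2^{-d}/d² + 2^{-d}log2/d - 2^{-α}(1+α log2)/α². -/
open Filter Real Set MeasureTheory
open scoped Topology


lemma my_meas (c : ℝ) (f : ℝ → ℝ) (hf : ContinuousOn f (Ioi 2)) :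
    AEStronglyMeasurable (fun τ : ℝ => f τ * τ ^ c) ((volume : Measure ℝ).restrict (Ioi 2)) := by
  refine ContinuousOn.aestronglyMeasurable ?_ measurableSet_Ioi
  refine hf.mul (ContinuousOn.rpow_const continuousOn_id fun x hx => Or.inl ?_)
  have : (2:ℝ) < x := hx
  intro h; rw [h] at this; linarith

lemma my_integ (s : ℝ) (hs : 0 < s) :
    IntegrableOn (fun τ : ℝ => Real.log τ * τ ^ (-1 - s)) (Ioi 2) := by
  have h2 : (0:ℝ) < 2 := by norm_num
  have hint : IntegrableOn (fun τ : ℝ => (2/s) * τ ^ (-1 - s/2)) (Ioi 2) := by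
    exact ((integrableOn_Ioi_rpow_iff h2).2 (by linarith)).const_mul _
  refine hint.mono' (my_meas _ _ (Real.continuousOn_log.mono ?_)) ?_
  · intro x hx; have : (2:ℝ) < x := hx
    simp only [mem_compl_iff, mem_singleton_iff]; intro h; rw [h] at this; linarith
  · filter_upwards [ae_restrict_mem measurableSet_Ioi] with τ hτ
    have hτ0 : (0:ℝ) < τ := by simpa using lt_trans h2 hτ
    have hlog : 0 ≤ Real.log τ := Real.log_nonneg (by linarith [mem_Ioi.1 hτ])
    have hle : Real.log τ ≤ τ ^ (s/2) / (s/2) := Real.log_le_rpow_div hτ0.le (by linarith)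
    rw [Real.norm_eq_abs, abs_of_nonneg (mul_nonneg hlog (Real.rpow_nonneg hτ0.le _))]
    have h3 : Real.log τ * τ ^ (-1 - s) ≤ (τ ^ (s/2) / (s/2)) * τ ^ (-1 - s) :=
      mul_le_mul_of_nonneg_right hle (Real.rpow_nonneg hτ0.le _)
    refine h3.trans (le_of_eq ?_)
    rw [div_mul_eq_mul_div, ← Real.rpow_add hτ0, div_eq_mul_inv, mul_comm ((2:ℝ)/s), div_eq_mul_inv]
    ring_nf

lemma my_val (s : ℝ) (hs : 0 < s) :
    ∫ τ in Ioi (2:ℝ), Real.log τ * τ ^ (-1 - s)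
      = 2 ^ (-s) * (Real.log 2 / s + 1 / s ^ 2) := by
  have h2 : (0:ℝ) < 2 := by norm_num
  have key : ∫ τ in Ioi (2:ℝ), Real.log τ * τ ^ (-1 - s)
      = 0 - (-(Real.log 2 / s + 1 / s ^ 2) * (2:ℝ) ^ (-s)) := by
    refine integral_Ioi_of_hasDerivAt_of_tendsto' (f := fun τ => -(Real.log τ / s + 1/s^2) * τ ^ (-s)) ?_ (my_integ s hs) ?_
    · intro x hx
      have hx0 : (0:ℝ) < x := lt_of_lt_of_le h2 hx
      have h1 : HasDerivAt (fun τ : ℝ => -(Real.log τ / s + 1/s^2)) (-(x⁻¹ / s)) x := by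
        exact (((Real.hasDerivAt_log hx0.ne').div_const s).add_const _).neg
      have h2' : HasDerivAt (fun τ : ℝ => τ ^ (-s)) (-s * x ^ (-s - 1)) x :=
        Real.hasDerivAt_rpow_const (Or.inl hx0.ne')
      have hd := h1.mul h2'
      refine hd.congr_deriv ?_
      beta_reduce
      have e1 : x ^ (-1 - s) = x⁻¹ * x ^ (-s) := by
        rw [← Real.rpow_neg_one x, ← Real.rpow_add hx0]; ring_nf
      have e2 : x ^ (-s - 1) = x⁻¹ * x ^ (-s) := by
        rw [← Real.rpow_neg_one x, ← Real.rpow_add hx0]; ring_nf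
      rw [e1, e2]
      field_simp
      ring
    · have h1 : Tendsto (fun τ : ℝ => Real.log τ * τ ^ (-s)) atTop (𝓝 0) := by
        have := (isLittleO_log_rpow_atTop hs).tendsto_div_nhds_zero
        refine this.congr' ?_
        filter_upwards [eventually_gt_atTop (0:ℝ)] with x hx
        rw [div_eq_mul_inv, ← Real.rpow_neg hx.le]
      have h2 : Tendsto (fun τ : ℝ => τ ^ (-s)) atTop (𝓝 0) :=
        tendsto_rpow_neg_atTop hs
      have h3 := ((h1.div_const s).add (h2.div_const (s^2))).neg
      simp only [zero_div, add_zero, neg_zero] at h3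
      refine h3.congr (fun x => ?_)
      ring
  rw [key]
  ring

-- auxiliary: x/(x+c) → 1
lemma my_aux (c : ℝ) : Tendsto (fun y : ℝ => y / (y + c)) atTop (𝓝 1) := by
  have h1 : Tendsto (fun y : ℝ => y + c) atTop atTop :=
    tendsto_atTop_add_const_right _ c tendsto_id
  have h2 : Tendsto (fun y : ℝ => c / (y + c)) atTop (𝓝 0) := by
    simpa [div_eq_mul_inv] using (h1.inv_tendsto_atTop).const_mul c
  have h3 := (tendsto_const_nhds (x := (1:ℝ)) (f := atTop)).sub h2
  rw [sub_zero] at h3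
  refine h3.congr' ?_
  filter_upwards [h1.eventually_gt_atTop 0] with y hy
  field_simp
  ring

lemma my_G1 (l : ℝ) :
    Tendsto (fun y : ℝ => y ^ 2 * ((1 + y)⁻¹ - (1 + y - l)⁻¹)) atTop (𝓝 (-l)) := by
  have h := ((my_aux 1).mul (my_aux (1 - l))).const_mul (-l)
  rw [mul_one, mul_one] at h
  refine h.congr' ?_
  filter_upwards [eventually_gt_atTop (|l| + 1)] with y hy
  have h0 : 0 < y := lt_of_le_of_lt (by positivity) hy
  have h1 : 0 < 1 + y := by linarith
  have h2 : 0 < 1 + y - l := by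
    have := abs_le.1 (le_refl |l|)
    have : l ≤ |l| := le_abs_self l
    linarith
  have e1 : y + 1 ≠ 0 := by linarith
  have e2 : y + (1 - l) ≠ 0 := by intro h; apply h2.ne'; linarith
  field_simp
  ring
lemma my_G2 (l : ℝ) :
    Tendsto (fun y : ℝ => y ^ 2 * ((1 + y)⁻¹ - (1 + y + l)⁻¹)) atTop (𝓝 l) := by
  have h := ((my_aux 1).mul (my_aux (1 + l))).const_mul l
  rw [mul_one, mul_one] at h
  refine h.congr' ?_
  filter_upwards [eventually_gt_atTop (|l| + 1)] with y hy
  have h0 : 0 < y := lt_of_le_of_lt (by positivity) hy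
  have h1 : 0 < 1 + y := by linarith
  have h2 : 0 < 1 + y + l := by
    have : -l ≤ |l| := neg_le_abs l
    linarith
  have e1 : y + 1 ≠ 0 := by linarith
  have e2 : y + (1 + l) ≠ 0 := by intro h; apply h2.ne'; linarith
  field_simp
  ring

lemma my_logcont : ContinuousOn Real.log (Ioi (2:ℝ)) := by
  refine Real.continuousOn_log.mono ?_
  intro x hx
  have : (2:ℝ) < x := hx
  simp only [mem_compl_iff, mem_singleton_iff]
  intro h; rw [h] at this; linarith

lemma my_bound_integ (α : ℝ) (hα0 : 0 < α) :
    IntegrableOn (fun τ : ℝ => 2 * (Real.log τ * (1 + Real.log τ)) * τ ^ (-1 - α)) (Ioi 2) := by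
  have h2 : (0:ℝ) < 2 := by norm_num
  set C : ℝ := 2 * (8/α) * (1 + 8/α) with hC
  have hint : IntegrableOn (fun τ : ℝ => C * τ ^ (α/4 + (-1 - α))) (Ioi 2) :=
    ((integrableOn_Ioi_rpow_iff h2).2 (by linarith)).const_mul _
  refine hint.mono' ?_ ?_
  · have : AEStronglyMeasurable (fun τ : ℝ => (2 * (Real.log τ * (1 + Real.log τ))) * τ ^ (-1-α))
        ((volume : Measure ℝ).restrict (Ioi 2)) :=
      my_meas _ _ (continuousOn_const.mul (my_logcont.mul (continuousOn_const.add my_logcont)))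
    exact this
  · filter_upwards [ae_restrict_mem measurableSet_Ioi] with τ hτ
    have hτ2 : (2:ℝ) < τ := hτ
    have hτ0 : (0:ℝ) < τ := by linarith
    have hlτ : 0 < Real.log τ := Real.log_pos (by linarith)
    have l1 : Real.log τ ≤ (8/α) * τ ^ (α/8) := by
      have := Real.log_le_rpow_div hτ0.le (show 0 < α/8 by linarith)
      calc Real.log τ ≤ τ ^ (α/8) / (α/8) := this
        _ = (8/α) * τ ^ (α/8) := by field_simp
    have hone : (1:ℝ) ≤ τ ^ (α/8) := Real.one_le_rpow (by linarith) (by linarith)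
    have l2 : 1 + Real.log τ ≤ (1 + 8/α) * τ ^ (α/8) := by nlinarith
    have l3 : Real.log τ * (1 + Real.log τ) ≤ ((8/α) * τ ^ (α/8)) * ((1 + 8/α) * τ ^ (α/8)) :=
      mul_le_mul l1 l2 (by linarith) (by positivity)
    have l4 : ((8/α) * τ ^ (α/8)) * ((1 + 8/α) * τ ^ (α/8)) = (8/α) * (1+8/α) * τ ^ (α/4) := by
      rw [show (8/α) * τ ^ (α/8) * ((1 + 8/α) * τ ^ (α/8)) = (8/α)*(1+8/α)*(τ^(α/8)*τ^(α/8)) by ring,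
        ← Real.rpow_add hτ0, show α/8+α/8 = α/4 by ring]
    have hrp : (0:ℝ) ≤ τ ^ (-1-α) := Real.rpow_nonneg hτ0.le _
    rw [Real.norm_eq_abs, abs_of_nonneg (by positivity)]
    calc 2 * (Real.log τ * (1 + Real.log τ)) * τ ^ (-1 - α)
        ≤ 2 * ((8/α)*(1+8/α)*τ^(α/4)) * τ ^ (-1-α) := by
          refine mul_le_mul_of_nonneg_right (by nlinarith [l3, l4]) hrp
      _ = C * (τ^(α/4) * τ^(-1-α)) := by rw [hC]; ring
      _ = C * τ ^ (α/4 + (-1-α)) := by rw [← Real.rpow_add hτ0]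

lemma my_rpow_meas (c : ℝ) :
    AEStronglyMeasurable (fun τ : ℝ => τ ^ c) ((volume : Measure ℝ).restrict (Ioi 2)) :=
  (my_meas c (fun _ => 1) continuousOn_const).congr
    (by filter_upwards with τ using by rw [one_mul])

noncomputable def myPsi (α s r τ : ℝ) : ℝ :=
  ((Real.log (Real.exp 1 * r))⁻¹ - (Real.log (Real.exp 1 * r / τ))⁻¹ +
    τ ^ (α - s) * ((Real.log (Real.exp 1 * r))⁻¹ - (Real.log (Real.exp 1 * r * τ))⁻¹)) *
    τ ^ (-1 - α)

noncomputable def myF (α s r : ℝ) : ℝ → ℝ :=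
  Set.indicator (Ioc 2 r) (fun τ => (Real.log r) ^ 2 * myPsi α s r τ)

-- the key bound
set_option maxHeartbeats 1000000 in
lemma my_key_bound (α s : ℝ) (hα0 : 0 < α) (hαs : α - s ≤ 0) (r τ : ℝ) (hτ2 : 2 < τ) :
    ‖myF α s r τ‖ ≤ 2 * (Real.log τ * (1 + Real.log τ)) * τ ^ (-1 - α) := by
  have hτ0 : (0:ℝ) < τ := by linarith
  have hlτ : 0 < Real.log τ := Real.log_pos (by linarith)
  have ht0 : (0:ℝ) ≤ τ ^ (-1-α) := Real.rpow_nonneg hτ0.le _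
  by_cases hmem : τ ∈ Ioc 2 r
  · have hτr : τ ≤ r := hmem.2
    have hr0 : (0:ℝ) < r := by linarith
    have hlogr : Real.log τ ≤ Real.log r := Real.log_le_log hτ0 hτr
    rw [myF, indicator_of_mem hmem, myPsi]
    set L : ℝ := Real.log (Real.exp 1 * r) with hL
    set lτ : ℝ := Real.log τ with hlt
    have hLe : L = 1 + Real.log r := by
      rw [hL, Real.log_mul (Real.exp_ne_zero 1) hr0.ne', Real.log_exp]
    have hL1 : 1 + lτ ≤ L := by rw [hLe]; linarith
    have hLpos : 0 < L := by linarith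
    have hu : (1:ℝ) ≤ L - lτ := by linarith
    have hv : 0 < L + lτ := by linarith
    have elog1 : Real.log (Real.exp 1 * r / τ) = L - lτ := by
      rw [Real.log_div (by positivity) hτ0.ne', hL]
    have elog2 : Real.log (Real.exp 1 * r * τ) = L + lτ := by
      rw [Real.log_mul (by positivity) hτ0.ne', hL]
    have hA : L⁻¹ - (L - lτ)⁻¹ = -(lτ / (L * (L - lτ))) := by field_simp; ring
    have hB : L⁻¹ - (L + lτ)⁻¹ = lτ / (L * (L + lτ)) := by field_simp; ring
    set c : ℝ := τ ^ (α - s) with hc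
    have hc0 : 0 ≤ c := Real.rpow_nonneg hτ0.le _
    have hc1 : c ≤ 1 := Real.rpow_le_one_of_one_le_of_nonpos (by linarith) hαs
    have hlogr0 : 0 ≤ Real.log r := le_trans hlτ.le hlogr
    clear_value L lτ c
    have hLr : Real.log r ≤ L := by rw [hLe]; linarith
    have key1 : (Real.log r)^2 * (lτ / (L * (L - lτ))) ≤ lτ * (1 + lτ) := by
      have hL2 : L ≤ (1+lτ)*(L-lτ) := by
        nlinarith [mul_nonneg hlτ.le (show (0:ℝ) ≤ L - lτ - 1 by linarith)]
      have e1 : (Real.log r)^2 ≤ L^2 := by nlinarith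
      have e2 : L^2 ≤ (1+lτ)*(L-lτ)*L := by nlinarith
      rw [mul_div_assoc', div_le_iff₀ (by nlinarith)]
      nlinarith [mul_le_mul_of_nonneg_right (e1.trans e2) hlτ.le]
    have key2 : c * ((Real.log r)^2 * (lτ / (L * (L + lτ)))) ≤ lτ := by
      have hsq : (Real.log r)^2 ≤ L * (L + lτ) := by
        rw [sq]
        exact mul_le_mul hLr (by linarith) hlogr0 (by linarith)
      have base : (Real.log r)^2 * (lτ / (L * (L + lτ))) ≤ lτ := by
        rw [mul_div_assoc', div_le_iff₀ (by positivity)]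
        calc (Real.log r)^2 * lτ ≤ (L * (L + lτ)) * lτ :=
              mul_le_mul_of_nonneg_right hsq hlτ.le
          _ = lτ * (L * (L + lτ)) := by ring
      calc c * ((Real.log r)^2 * (lτ / (L * (L + lτ))))
          ≤ 1 * ((Real.log r)^2 * (lτ / (L * (L + lτ)))) := by
            refine mul_le_mul_of_nonneg_right hc1 (by positivity)
        _ = (Real.log r)^2 * (lτ / (L * (L + lτ))) := one_mul _
        _ ≤ lτ := base
    rw [elog1, elog2, hA, hB, Real.norm_eq_abs]
    have habs : |(Real.log r)^2 * ((-(lτ / (L * (L - lτ))) + c * (lτ / (L * (L + lτ)))) * τ ^ (-1-α))|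
        ≤ ((Real.log r)^2 * (lτ / (L * (L - lτ))) + c * ((Real.log r)^2 * (lτ / (L * (L + lτ))))) * τ ^ (-1-α) := by
      rw [show (Real.log r)^2 * ((-(lτ / (L * (L - lτ))) + c * (lτ / (L * (L + lτ)))) * τ ^ (-1-α))
        = ((Real.log r)^2 * (-(lτ / (L * (L - lτ)))) + c * ((Real.log r)^2 * (lτ / (L * (L + lτ))))) * τ ^ (-1-α) by ring]
      rw [abs_mul, abs_of_nonneg ht0]
      refine mul_le_mul_of_nonneg_right ((abs_add_le _ _).trans ?_) ht0
      have p1 : 0 ≤ lτ / (L * (L - lτ)) := by positivity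
      have p2 : 0 ≤ lτ / (L * (L + lτ)) := by positivity
      rw [abs_mul, abs_mul, abs_of_nonneg (sq_nonneg (Real.log r)), abs_of_nonneg hc0,
        abs_neg, abs_of_nonneg p1, abs_of_nonneg (mul_nonneg (sq_nonneg (Real.log r)) p2)]
    refine habs.trans ?_
    refine (mul_le_mul_of_nonneg_right (add_le_add key1 key2) ht0).trans ?_
    have h9 : lτ * (1 + lτ) = lτ + lτ^2 := by ring
    have : lτ * (1 + lτ) + lτ ≤ 2 * (lτ * (1 + lτ)) := by
      rw [h9]; nlinarith [sq_nonneg lτ]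
    exact mul_le_mul_of_nonneg_right this ht0
  · rw [myF, indicator_of_notMem hmem, norm_zero]
    have h1 : 0 ≤ Real.log τ * (1 + Real.log τ) := mul_nonneg hlτ.le (by linarith)
    exact mul_nonneg (mul_nonneg (by norm_num) h1) ht0

/-- Explicit limit (case `b = 1`): with
`Φ(τ,r) = r^{-(d-α)}[(log er)⁻¹ - (log(er/τ))⁻¹ + τ^{-d+α}((log er)⁻¹ - (log(erτ))⁻¹)]`,
one has `lim_{r→∞} (log r)² r^{d-α} ∫_2^r Φ(τ,r) τ^{-1-α} dτ
  = 2^{-d}/d² + 2^{-d} log 2 / d - 2^{-α}(1 + α log 2)/α²`. -/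
theorem stmt_15 (d : ℕ) (hd : 2 ≤ d) (α : ℝ) (hα0 : 0 < α) (hα2 : α < 2) :
    Tendsto (fun r : ℝ => (Real.log r) ^ 2 * r ^ ((d : ℝ) - α) *
        ∫ τ in (2:ℝ)..r,
          (r ^ (α - (d : ℝ)) *
            ((Real.log (Real.exp 1 * r))⁻¹ - (Real.log (Real.exp 1 * r / τ))⁻¹ +
              τ ^ (α - (d : ℝ)) *
                ((Real.log (Real.exp 1 * r))⁻¹ - (Real.log (Real.exp 1 * r * τ))⁻¹))) *
            τ ^ (-1 - α))
      atTop
      (nhds ((2 : ℝ) ^ (-(d : ℝ)) / (d : ℝ) ^ 2 +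
        (2 : ℝ) ^ (-(d : ℝ)) * Real.log 2 / (d : ℝ) -
        (2 : ℝ) ^ (-α) * (1 + α * Real.log 2) / α ^ 2)) := by
  have hs2 : (2:ℝ) ≤ (d:ℝ) := by exact_mod_cast hd
  set s : ℝ := (d : ℝ) with hs
  have hs0 : (0:ℝ) < s := by linarith
  have hαs : α - s ≤ 0 := by linarith
  set f : ℝ → ℝ := fun τ => Real.log τ * τ ^ (-1 - s) - Real.log τ * τ ^ (-1 - α) with hf
  -- main convergence via dominated convergence
  have hmain : Tendsto (fun r : ℝ => ∫ τ in Ioi (2:ℝ), myF α s r τ) atTop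
      (𝓝 (∫ τ in Ioi (2:ℝ), f τ)) := by
    refine tendsto_integral_filter_of_dominated_convergence
      (fun τ => 2 * (Real.log τ * (1 + Real.log τ)) * τ ^ (-1 - α)) ?_ ?_
      (my_bound_integ α hα0) ?_
    · -- measurability
      refine Eventually.of_forall fun r => ?_
      have m1 : Measurable (fun τ : ℝ =>
          (Real.log (Real.exp 1 * r))⁻¹ - (Real.log (Real.exp 1 * r / τ))⁻¹) :=
        (measurable_const.sub ((Real.measurable_log.comp
          (measurable_const.div measurable_id)).inv))
      have m2 : Measurable (fun τ : ℝ =>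
          (Real.log (Real.exp 1 * r))⁻¹ - (Real.log (Real.exp 1 * r * τ))⁻¹) :=
        (measurable_const.sub ((Real.measurable_log.comp
          (measurable_const.mul measurable_id)).inv))
      have hψm : AEStronglyMeasurable (fun τ => (Real.log r)^2 * myPsi α s r τ)
          ((volume : Measure ℝ).restrict (Ioi 2)) := by
        refine AEStronglyMeasurable.const_mul ?_ _
        exact ((m1.aestronglyMeasurable.add
          ((my_rpow_meas (α - s)).mul m2.aestronglyMeasurable)).mul (my_rpow_meas (-1-α)))
      exact hψm.indicator measurableSet_Ioc
    · -- bound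
      refine Eventually.of_forall fun r => ?_
      filter_upwards [ae_restrict_mem measurableSet_Ioi] with τ hτ
      exact my_key_bound α s hα0 hαs r τ hτ
    · -- pointwise limit
      filter_upwards [ae_restrict_mem measurableSet_Ioi] with τ hτ
      have hτ2 : (2:ℝ) < τ := hτ
      have hτ0 : (0:ℝ) < τ := by linarith
      have hlτ : 0 < Real.log τ := Real.log_pos (by linarith)
      have hT1 : Tendsto (fun r : ℝ =>
          (Real.log r)^2 * ((1 + Real.log r)⁻¹ - (1 + Real.log r - Real.log τ)⁻¹))
          atTop (𝓝 (-Real.log τ)) := (my_G1 (Real.log τ)).comp Real.tendsto_log_atTop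
      have hT2 : Tendsto (fun r : ℝ =>
          (Real.log r)^2 * ((1 + Real.log r)⁻¹ - (1 + Real.log r + Real.log τ)⁻¹))
          atTop (𝓝 (Real.log τ)) := (my_G2 (Real.log τ)).comp Real.tendsto_log_atTop
      have hT : Tendsto (fun r : ℝ =>
          ((Real.log r)^2 * ((1 + Real.log r)⁻¹ - (1 + Real.log r - Real.log τ)⁻¹)) * τ ^ (-1-α)
          + (τ ^ (α - s) * ((Real.log r)^2 * ((1 + Real.log r)⁻¹ - (1 + Real.log r + Real.log τ)⁻¹)))
            * τ ^ (-1-α)) atTop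
          (𝓝 ((-Real.log τ) * τ ^ (-1-α) + (τ ^ (α-s) * Real.log τ) * τ ^ (-1-α))) :=
        (hT1.mul_const _).add ((hT2.const_mul _).mul_const _)
      have hval : (-Real.log τ) * τ ^ (-1-α) + (τ ^ (α-s) * Real.log τ) * τ ^ (-1-α) = f τ := by
        rw [hf]
        have h5 : τ ^ (α-s) * τ ^ (-1-α) = τ ^ (-1-s) := by
          rw [← Real.rpow_add hτ0, show α - s + (-1-α) = -1-s by ring]
        rw [show τ ^ (α-s) * Real.log τ * τ ^ (-1-α)
          = Real.log τ * (τ ^ (α-s) * τ ^ (-1-α)) by ring, h5]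
        ring
      rw [hval] at hT
      refine hT.congr' ?_
      filter_upwards [eventually_ge_atTop τ, eventually_gt_atTop (0:ℝ)] with r hrτ hr0
      have hLe : Real.log (Real.exp 1 * r) = 1 + Real.log r := by
        rw [Real.log_mul (Real.exp_ne_zero 1) hr0.ne', Real.log_exp]
      have elog1 : Real.log (Real.exp 1 * r / τ) = 1 + Real.log r - Real.log τ := by
        rw [Real.log_div (by positivity) hτ0.ne', hLe]
      have elog2 : Real.log (Real.exp 1 * r * τ) = 1 + Real.log r + Real.log τ := by
        rw [Real.log_mul (by positivity) hτ0.ne', hLe]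
      have hmem : τ ∈ Ioc 2 r := ⟨hτ2, hrτ⟩
      rw [eq_comm, myF, indicator_of_mem hmem, myPsi, hLe, elog1, elog2]
      ring
  -- identify the limit value
  have hval : ∫ τ in Ioi (2:ℝ), f τ
      = (2 : ℝ) ^ (-s) / s ^ 2 + (2 : ℝ) ^ (-s) * Real.log 2 / s -
        (2 : ℝ) ^ (-α) * (1 + α * Real.log 2) / α ^ 2 := by
    rw [hf, integral_sub (my_integ s hs0) (my_integ α hα0), my_val s hs0, my_val α hα0]
    have hα : α ≠ 0 := hα0.ne'
    have hsne : s ≠ 0 := hs0.ne'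
    field_simp
    ring
  rw [hval] at hmain
  -- relate the original function with F
  refine hmain.congr' ?_
  filter_upwards [eventually_ge_atTop (2:ℝ), eventually_gt_atTop (0:ℝ)] with r hr2 hr0
  have step1 : (∫ τ in (2:ℝ)..r,
      (r ^ (α - s) * ((Real.log (Real.exp 1 * r))⁻¹ - (Real.log (Real.exp 1 * r / τ))⁻¹ +
        τ ^ (α - s) * ((Real.log (Real.exp 1 * r))⁻¹ - (Real.log (Real.exp 1 * r * τ))⁻¹))) *
        τ ^ (-1 - α))
      = r ^ (α - s) * ∫ τ in (2:ℝ)..r, myPsi α s r τ := by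
    rw [← intervalIntegral.integral_const_mul]
    refine intervalIntegral.integral_congr fun τ _ => ?_
    rw [myPsi]; ring
  rw [step1]
  have hpow : r ^ (s - α) * r ^ (α - s) = 1 := by
    rw [← Real.rpow_add hr0, show s - α + (α - s) = 0 by ring, Real.rpow_zero]
  rw [show (Real.log r)^2 * r ^ (s - α) * (r ^ (α - s) * ∫ τ in (2:ℝ)..r, myPsi α s r τ)
      = (r ^ (s-α) * r ^ (α-s)) * ((Real.log r)^2 * ∫ τ in (2:ℝ)..r, myPsi α s r τ) by ring,
    hpow, one_mul]
  rw [intervalIntegral.integral_of_le hr2, ← integral_const_mul]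
  calc ∫ τ in Ioi (2:ℝ), myF α s r τ
      = ∫ τ in Ioi (2:ℝ) ∩ Ioc 2 r, (Real.log r)^2 * myPsi α s r τ := by
        rw [myF, setIntegral_indicator measurableSet_Ioc]
    _ = ∫ τ in Ioc (2:ℝ) r, (Real.log r)^2 * myPsi α s r τ := by
        rw [inter_eq_right.mpr Ioc_subset_Ioi_self]
end
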